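/- arXiv:2009.00488 — 3 statements merged into one kernel-verified Lean document; each statement's English description precedes it below -/
import Mathlib

section
/- Let G and H be simple graphs on finite vertex types, and let G ⊗ H be their tensor product. Then for all vertices u of G and v of H, dp_{G⊗H}((u,v)) = ∑_{u' ∈ N_G(u)} ∑_{v' ∈ N_H(v)} X^{deg_G(u') · deg_H(v')} in ℕ[X]. (Equivalently, dp_{G⊗H}((u,v)) is the tensor product dp_G(u) ⊗ dp_H(v) of polynomials, where (∑ a_i X^i) ⊗ (∑ b_j X^j) := ∑_{i,j} a_i b_j X^{i·j}.) -/
open Polynomial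

/-- The neighbor finset of a vertex (with classical decidability of adjacency). -/
noncomputable def nbhd {V : Type*} [Fintype V] (G : SimpleGraph V) (v : V) : Finset V :=
  letI := Classical.decRel G.Adj
  G.neighborFinset v

/-- The degree of a vertex (with classical decidability of adjacency). -/
noncomputable def degc {V : Type*} [Fintype V] (G : SimpleGraph V) (v : V) : ℕ :=
  (nbhd G v).card

/-- The degree polynomial of a vertex `v`: the coefficient of `X^i` is the number
of neighbors of `v` having degree `i`. -/
noncomputable def dp {V : Type*} [Fintype V] (G : SimpleGraph V) (v : V) : ℕ[X] :=
  ∑ w ∈ nbhd G v, X ^ degc G w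

/-- The degree polynomial of a graph `G`: the coefficient of `X^i` is the number
of vertices of `G` of degree `i`. -/
noncomputable def dpG {V : Type*} [Fintype V] (G : SimpleGraph V) : ℕ[X] :=
  ∑ v, X ^ degc G v

/-- The tensor product of two simple graphs. -/
def tensorProd {α β : Type*} (G : SimpleGraph α) (H : SimpleGraph β) :
    SimpleGraph (α × β) where
  Adj x y := G.Adj x.1 y.1 ∧ H.Adj x.2 y.2
  symm := by refine ⟨?_⟩; rintro ⟨a, b⟩ ⟨c, d⟩ ⟨h₁, h₂⟩; exact ⟨h₁.symm, h₂.symm⟩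
  loopless := by refine ⟨?_⟩; rintro ⟨a, b⟩ ⟨h, -⟩; exact G.loopless.irrefl a h

@[simp]
lemma mem_nbhd {V : Type*} [Fintype V] {G : SimpleGraph V} {v w : V} :
    w ∈ nbhd G v ↔ G.Adj v w := by
  simp [nbhd]

section tensorProd

variable {α β : Type*} [Fintype α] [Fintype β] (G : SimpleGraph α) (H : SimpleGraph β)

lemma nbhd_tensorProd (u : α) (v : β) :
    nbhd (tensorProd G H) (u, v) = nbhd G u ×ˢ nbhd H v := by
  ext ⟨a, b⟩
  simp [tensorProd]

lemma degc_tensorProd (u : α) (v : β) :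
    degc (tensorProd G H) (u, v) = degc G u * degc H v := by
  rw [degc, nbhd_tensorProd, Finset.card_product, degc, degc]

end tensorProd

/-- Degree polynomial of a vertex of the tensor product:
`dp_{G⊗H}((u,v)) = ∑_{u' ∈ N(u)} ∑_{v' ∈ N(v)} X^{deg u' · deg v'}`,
i.e. the tensor product of the polynomials `dp_G(u)` and `dp_H(v)`. -/
theorem dp_tensorProd {α β : Type*} [Fintype α] [Fintype β]
    (G : SimpleGraph α) (H : SimpleGraph β) (u : α) (v : β) :
    dp (tensorProd G H) (u, v)
      = ∑ u' ∈ nbhd G u, ∑ v' ∈ nbhd H v, X ^ (degc G u' * degc H v') := by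
  rw [dp, nbhd_tensorProd, Finset.sum_product]
  simp only [degc_tensorProd]
end

section
/- There is no finite simple graph G whose multiset of degree polynomials of vertices equals {2X^2, 2X, 2X, X, X}; i.e., there is no simple graph G on a finite vertex type such that the multiset (Multiset image of dp_G over all vertices) is {2•X^2, 2•X, 2•X, X, X} in ℕ[X], even though this multiset satisfies all three necessary conditions of the realizability theorem. -/
open Polynomial

lemma mem_nbhd_iff {V : Type*} [Fintype V] (G : SimpleGraph V) {v w : V} :
    w ∈ nbhd G v ↔ G.Adj v w := by
  classical
  simp [nbhd, SimpleGraph.mem_neighborFinset]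

lemma eval_dp {V : Type*} [Fintype V] (G : SimpleGraph V) (v : V) :
    (dp G v).eval 1 = degc G v := by
  simp [dp, degc, Polynomial.eval_finset_sum]

lemma Xsq_not_mem :
    (X ^ 2 : ℕ[X]) ∉ ({2 • X ^ 2, 2 • X, 2 • X, X, X} : Multiset (Polynomial ℕ)) := by
  simp only [Multiset.insert_eq_cons, Multiset.mem_cons, Multiset.mem_singleton]
  push_neg
  refine ⟨?_, ?_, ?_, ?_, ?_⟩ <;>
  · intro h2
    have := congrArg (fun p => Polynomial.coeff p 2) h2
    simp [Polynomial.coeff_X] at this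

/-- The multiset of polynomials {2 • X ^ 2, 2 • X, 2 • X, X, X} is not realizable as the multiset of vertex
degree polynomials of a finite simple graph. -/
theorem not_realizable_s4 :
    ¬ ∃ (V : Type) (inst : Fintype V) (G : SimpleGraph V),
        (@Finset.univ V inst).val.map (@dp V inst G)
          = ({2 • X ^ 2, 2 • X, 2 • X, X, X} : Multiset (Polynomial ℕ)) := by
    classical
  rintro ⟨V, inst, G, h⟩
  have h1 : (2 • X : ℕ[X]) ∈ Multiset.map (dp G) Finset.univ.val := by
    rw [h]
    exact Multiset.mem_cons_of_mem (Multiset.mem_cons_self _ _)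
  obtain ⟨v, -, hv⟩ := Multiset.mem_map.mp h1
  have hdeg : degc G v = 2 := by
    have := eval_dp G v
    rw [hv] at this
    simpa using this.symm
  have hall : ∀ w ∈ nbhd G v, degc G w = 1 := by
    intro w hw
    by_contra hne
    have hc : (dp G v).coeff 1 = 2 := by rw [hv]; simp
    rw [dp, Polynomial.finset_sum_coeff, ← Finset.add_sum_erase _ _ hw] at hc
    have h0 : (X ^ degc G w : ℕ[X]).coeff 1 = 0 := by
      rw [Polynomial.coeff_X_pow, if_neg (fun hh => hne hh.symm)]
    rw [h0, zero_add] at hc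
    have hle : ∑ x ∈ (nbhd G v).erase w, (X ^ degc G x : ℕ[X]).coeff 1
        ≤ ((nbhd G v).erase w).card := by
      rw [Finset.card_eq_sum_ones]
      refine Finset.sum_le_sum fun x _ => ?_
      rw [Polynomial.coeff_X_pow]
      split <;> omega
    have hcard : ((nbhd G v).erase w).card = 1 := by
      rw [Finset.card_erase_of_mem hw]
      change degc G v - 1 = 1
      rw [hdeg]
    omega
  have hnev : (nbhd G v).Nonempty := by
    rw [← Finset.card_pos]
    change 0 < degc G v
    omega
  obtain ⟨w, hw⟩ := hnev
  have hw1 : degc G w = 1 := hall w hw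
  have hvw : v ∈ nbhd G w := (mem_nbhd_iff G).mpr ((mem_nbhd_iff G).mp hw).symm
  have hnw : nbhd G w = {v} := by
    obtain ⟨a, ha⟩ := Finset.card_eq_one.mp hw1
    rw [ha] at hvw ⊢
    rw [Finset.mem_singleton.mp hvw]
  have hdpw : dp G w = X ^ 2 := by
    rw [dp, hnw, Finset.sum_singleton, hdeg]
  have h2 : (X ^ 2 : ℕ[X]) ∈ Multiset.map (dp G) Finset.univ.val :=
    Multiset.mem_map.mpr ⟨w, Finset.mem_univ w, hdpw⟩
  rw [h] at h2
  exact Xsq_not_mem h2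
end

section
/- There exist two simple graphs G₁ and G₂ on the vertex type Fin 6 that have equal multisets of vertex degrees but different multisets of degree polynomials of vertices; i.e., ∃ G₁ G₂ : SimpleGraph (Fin 6), (the Multiset image of deg_{G₁} over all vertices) = (the Multiset image of deg_{G₂} over all vertices) ∧ (the Multiset image of dp_{G₁} over all vertices) ≠ (the Multiset image of dp_{G₂} over all vertices). -/
/-!
The path `P₆` and the disjoint union `K₃ ⊔ P₃` both have degrees `1, 1, 2, 2, 2, 2`.
The coefficient of `X` in `dp G v` counts the leaves adjacent to `v`: the centre of the `P₃`
has two of them, while no vertex of `P₆` has more than one.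
-/

open Polynomial

open Finset

section

variable {V : Type*} [Fintype V] (G : SimpleGraph V) [DecidableRel G.Adj]

theorem nbhd_eq_neighborFinset (v : V) : nbhd G v = G.neighborFinset v := by
  ext w
  simp [nbhd]

theorem degc_eq_degree : degc G = fun v ↦ G.degree v := by
  ext v
  rw [degc, nbhd_eq_neighborFinset, SimpleGraph.card_neighborFinset_eq_degree]

theorem coeff_dp (v : V) (i : ℕ) :
    (dp G v).coeff i = #{w ∈ G.neighborFinset v | G.degree w = i} := by
  simp only [dp, nbhd_eq_neighborFinset, degc_eq_degree, finsetSum_coeff, coeff_X_pow,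
    eq_comm (a := i), sum_boole, Nat.cast_id]

end

def pathSix : SimpleGraph (Fin 6) :=
  .fromEdgeSet {s(0, 1), s(1, 2), s(2, 3), s(3, 4), s(4, 5)}

def triangleSupPathThree : SimpleGraph (Fin 6) :=
  .fromEdgeSet {s(0, 1), s(1, 2), s(2, 0), s(3, 4), s(4, 5)}

instance : DecidableRel pathSix.Adj :=
  inferInstanceAs (DecidableRel (SimpleGraph.fromEdgeSet _).Adj)

instance : DecidableRel triangleSupPathThree.Adj :=
  inferInstanceAs (DecidableRel (SimpleGraph.fromEdgeSet _).Adj)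

/-- There exist two simple graphs on `Fin 6` with equal degree multisets but different
multisets of vertex degree polynomials. -/
theorem exists_same_degree_multiset_different_dp_multiset :
    ∃ G₁ G₂ : SimpleGraph (Fin 6),
      Finset.univ.val.map (degc G₁) = Finset.univ.val.map (degc G₂)
      ∧ Finset.univ.val.map (dp G₁) ≠ Finset.univ.val.map (dp G₂) := by
  refine ⟨pathSix, triangleSupPathThree, ?_, ?_⟩
  · rw [degc_eq_degree, degc_eq_degree]
    decide
  · intro h
    have leaf_neighbours := congrArg (Multiset.map (coeff · 1)) h
    simp only [Multiset.map_map, Function.comp_def, coeff_dp] at leaf_neighbours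
    revert leaf_neighbours
    decide
end
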